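/- Suppose f(z) = Σ_{k=0}^∞ a_k z^k is analytic on the unit disk with |f(z)| < 1. Then for |z| = r ≤ 1/3, |f(z)|^2 + Σ_{k=1}^∞ |a_k| r^k ≤ 1. -/

import Mathlib

/-!
By the Schwarz–Pick lemma, `‖f z‖ ≤ (A + r) / (1 + A r)` with `A = ‖a 0‖`. Averaging `f` over
the rotations of its argument by the `k`-th roots of unity gives a self-map
`w ↦ ∑ a (k m) wᵐ` of the disk whose derivative at `0` is `a k`, so Schwarz–Pick at the origin
yields Wiener's bound `‖a k‖ ≤ 1 - A²`. Summing the geometric series, it remains to see that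
`((A + r) / (1 + A r))² + (1 - A²) r / (1 - r) ≤ 1` for `r ≤ 1/3`; since
`1 - ((A + r) / (1 + A r))² = (1 - A²)(1 - r²) / (1 + A r)²`, this reduces to
`r (1 + r) ≤ (1 - r)²`, i.e. `3 r ≤ 1`.
-/

open Metric Complex ComplexConjugate Set Finset

section PowerSeries

variable {g : ℂ → ℂ} {a : ℕ → ℂ}

theorem eball_zero_one : eball (0 : ℂ) 1 = ball 0 1 := by
  simpa using eball_coe (x := (0 : ℂ)) (ε := 1)

theorem hasFPowerSeriesOnBall_ofScalars_of_hasSum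
    (hg : ∀ z ∈ ball (0 : ℂ) 1, HasSum (fun n => a n * z ^ n) (g z)) :
    HasFPowerSeriesOnBall g (FormalMultilinearSeries.ofScalars ℂ a) 0 1 := by
  refine ⟨ENNReal.le_of_forall_nnreal_lt fun r hr => ?_, zero_lt_one, fun {y} hy => ?_⟩
  · have hr : (r : ℂ) ∈ ball (0 : ℂ) 1 := by simpa using hr
    refine FormalMultilinearSeries.le_radius_of_tendsto _ (l := 0) ?_
    simpa [FormalMultilinearSeries.ofScalars_norm] using
      (hg _ hr).summable.tendsto_atTop_zero.norm
  · rw [eball_zero_one] at hy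
    simpa [FormalMultilinearSeries.ofScalars_apply_eq, mul_comm] using hg y hy

theorem apply_zero_of_hasSum
    (hg : ∀ z ∈ ball (0 : ℂ) 1, HasSum (fun n => a n * z ^ n) (g z)) : g 0 = a 0 :=
  ((hasFPowerSeriesOnBall_ofScalars_of_hasSum hg).hasFPowerSeriesAt.coeff_zero fun _ => 0).symm.trans
    (by simp)

theorem deriv_zero_eq_of_hasSum
    (hg : ∀ z ∈ ball (0 : ℂ) 1, HasSum (fun n => a n * z ^ n) (g z)) : deriv g 0 = a 1 := by
  simp [(hasFPowerSeriesOnBall_ofScalars_of_hasSum hg).hasFPowerSeriesAt.deriv]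

theorem differentiableOn_of_hasSum
    (hg : ∀ z ∈ ball (0 : ℂ) 1, HasSum (fun n => a n * z ^ n) (g z)) :
    DifferentiableOn ℂ g (ball 0 1) := by
  rw [← eball_zero_one]
  exact (hasFPowerSeriesOnBall_ofScalars_of_hasSum hg).differentiableOn

end PowerSeries

section Mobius

noncomputable def mobius (c w : ℂ) : ℂ := (w - c) / (1 - conj c * w)

variable {c w : ℂ}

theorem mobius_self : mobius c c = 0 := by simp [mobius]

theorem one_sub_conj_mul_ne_zero (hc : ‖c‖ < 1) (hw : ‖w‖ ≤ 1) : 1 - conj c * w ≠ 0 := by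
  refine sub_ne_zero.2 fun h => ?_
  have : ‖conj c * w‖ < 1 := by
    rw [norm_mul, RCLike.norm_conj]
    nlinarith [norm_nonneg c, norm_nonneg w]
  simp [← h] at this

theorem normSq_one_sub_conj_mul_sub_normSq (c w : ℂ) :
    normSq (1 - conj c * w) - normSq (w - c) = (1 - normSq c) * (1 - normSq w) := by
  simp only [normSq_apply, sub_re, sub_im, mul_re, mul_im, conj_re, conj_im, one_re, one_im]
  ring

theorem norm_mobius_lt_one (hc : ‖c‖ < 1) (hw : ‖w‖ < 1) : ‖mobius c w‖ < 1 := by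
  have hden := one_sub_conj_mul_ne_zero hc hw.le
  rw [mobius, norm_div, div_lt_one (norm_pos_iff.2 hden), ← sq_lt_sq₀ (norm_nonneg _)
    (norm_nonneg _), Complex.sq_norm, Complex.sq_norm, ← sub_pos,
    normSq_one_sub_conj_mul_sub_normSq, ← Complex.sq_norm, ← Complex.sq_norm]
  have := norm_nonneg c
  have := norm_nonneg w
  apply mul_pos <;> nlinarith

theorem mobius_neg_mobius (hc : ‖c‖ < 1) (hw : ‖w‖ ≤ 1) : mobius (-c) (mobius c w) = w := by
  have hden := one_sub_conj_mul_ne_zero hc hw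
  have hcc := one_sub_conj_mul_ne_zero hc hc.le
  have hnum : (w - c) / (1 - conj c * w) + c = w * ((1 - conj c * c) / (1 - conj c * w)) := by
    rw [div_add' _ _ _ hden, mul_div_assoc']
    ring
  have hdenom : 1 + conj c * ((w - c) / (1 - conj c * w)) =
      (1 - conj c * c) / (1 - conj c * w) := by
    rw [mul_div_assoc', add_div' _ _ _ hden]
    ring
  simp only [mobius, map_neg, sub_neg_eq_add, neg_mul, hnum, hdenom]
  exact mul_div_cancel_right₀ w (div_ne_zero hcc hden)

theorem norm_mobius_neg_le (hc : ‖c‖ < 1) (hw : ‖w‖ ≤ 1) :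
    ‖mobius (-c) w‖ ≤ (‖c‖ + ‖w‖) / (1 + ‖c‖ * ‖w‖) := by
  have hden : 1 - conj (-c) * w ≠ 0 := one_sub_conj_mul_ne_zero (by simpa using hc) hw
  have key := normSq_one_sub_conj_mul_sub_normSq (-c) w
  simp only [← Complex.sq_norm, norm_neg] at key
  have htri : ‖1 - conj (-c) * w‖ ≤ 1 + ‖c‖ * ‖w‖ := by
    simpa using norm_add_le 1 (conj c * w)
  rw [mobius, norm_div, div_le_div_iff₀ (norm_pos_iff.2 hden) (by positivity)]
  have hA := norm_nonneg c
  have hU := norm_nonneg w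
  have hK : 0 ≤ (1 - ‖c‖ ^ 2) * (1 - ‖w‖ ^ 2) := by apply mul_nonneg <;> nlinarith
  have hsq : ‖1 - conj (-c) * w‖ ^ 2 ≤ (1 + ‖c‖ * ‖w‖) ^ 2 :=
    pow_le_pow_left₀ (norm_nonneg _) htri 2
  refine le_of_pow_le_pow_left₀ two_ne_zero (by positivity) ?_
  nlinarith [mul_le_mul_of_nonneg_left hsq hK]

theorem hasDerivAt_mobius_self (hc : ‖c‖ < 1) :
    HasDerivAt (mobius c) (1 - conj c * c)⁻¹ c := by
  have hcc := one_sub_conj_mul_ne_zero hc hc.le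
  have := ((hasDerivAt_id c).sub_const c).fun_div
    (((hasDerivAt_id c).const_mul (conj c)).const_sub 1) hcc
  refine this.congr_deriv ?_
  simp only [id, sub_self, zero_mul, sub_zero, mul_one, one_mul]
  rw [sq, ← div_div, div_self hcc, one_div]

theorem div_add_mul_le_div_add_mul {A s t : ℝ} (hA0 : 0 ≤ A) (hA1 : A ≤ 1) (hs : 0 ≤ s)
    (hst : s ≤ t) : (A + s) / (1 + A * s) ≤ (A + t) / (1 + A * t) := by
  rw [div_le_div_iff₀ (by positivity) (by nlinarith)]
  nlinarith [mul_nonneg (sub_nonneg.2 hst)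
    (mul_nonneg (sub_nonneg.2 hA1) (by linarith : 0 ≤ 1 + A))]

end Mobius

section SchwarzPick

variable {h : ℂ → ℂ}

theorem differentiableOn_mobius_comp (hd : DifferentiableOn ℂ h (ball 0 1))
    (hmaps : MapsTo h (ball 0 1) (ball 0 1)) {c : ℂ} (hc : ‖c‖ < 1) :
    DifferentiableOn ℂ (fun w => mobius c (h w)) (ball 0 1) :=
  (hd.sub_const c).div ((hd.const_mul (conj c)).const_sub 1) fun _ hw =>
    one_sub_conj_mul_ne_zero hc (mem_ball_zero_iff.1 (hmaps hw)).le

theorem mapsTo_mobius_comp (hmaps : MapsTo h (ball 0 1) (ball 0 1)) {c : ℂ} (hc : ‖c‖ < 1) :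
    MapsTo (fun w => mobius c (h w)) (ball 0 1) (ball 0 1) := fun _ hw =>
  mem_ball_zero_iff.2 (norm_mobius_lt_one hc (mem_ball_zero_iff.1 (hmaps hw)))

theorem schwarzPick_norm_le (hd : DifferentiableOn ℂ h (ball 0 1))
    (hmaps : MapsTo h (ball 0 1) (ball 0 1)) {z : ℂ} (hz : z ∈ ball 0 1) :
    ‖h z‖ ≤ (‖h 0‖ + ‖z‖) / (1 + ‖h 0‖ * ‖z‖) := by
  have hc : ‖h 0‖ < 1 := mem_ball_zero_iff.1 (hmaps (mem_ball_self one_pos))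
  have hφz : ‖mobius (h 0) (h z)‖ ≤ ‖z‖ :=
    Complex.norm_le_norm_of_mapsTo_ball (differentiableOn_mobius_comp hd hmaps hc)
      ((mapsTo_mobius_comp hmaps hc).mono_right ball_subset_closedBall) mobius_self
      (mem_ball_zero_iff.1 hz)
  calc ‖h z‖ = ‖mobius (-h 0) (mobius (h 0) (h z))‖ := by
        rw [mobius_neg_mobius hc (mem_ball_zero_iff.1 (hmaps hz)).le]
    _ ≤ (‖h 0‖ + ‖mobius (h 0) (h z)‖) / (1 + ‖h 0‖ * ‖mobius (h 0) (h z)‖) :=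
        norm_mobius_neg_le hc (hφz.trans (mem_ball_zero_iff.1 hz).le)
    _ ≤ (‖h 0‖ + ‖z‖) / (1 + ‖h 0‖ * ‖z‖) :=
        div_add_mul_le_div_add_mul (norm_nonneg _) hc.le (norm_nonneg _) hφz

theorem schwarzPick_norm_deriv_le (hd : DifferentiableOn ℂ h (ball 0 1))
    (hmaps : MapsTo h (ball 0 1) (ball 0 1)) : ‖deriv h 0‖ ≤ 1 - ‖h 0‖ ^ 2 := by
  have hc : ‖h 0‖ < 1 := mem_ball_zero_iff.1 (hmaps (mem_ball_self one_pos))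
  have hpos : 0 < 1 - ‖h 0‖ ^ 2 := by nlinarith [norm_nonneg (h 0)]
  have hderiv : HasDerivAt (fun w => mobius (h 0) (h w))
      ((1 - conj (h 0) * h 0)⁻¹ * deriv h 0) 0 :=
    (hasDerivAt_mobius_self hc).comp 0
      (hd.differentiableAt (isOpen_ball.mem_nhds (mem_ball_self one_pos))).hasDerivAt
  have hle := Complex.norm_deriv_le_one_of_mapsTo_ball
    (differentiableOn_mobius_comp hd hmaps hc)
    (by simpa [mobius_self] using (mapsTo_mobius_comp hmaps hc).mono_right ball_subset_closedBall)
    one_pos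
  rwa [hderiv.deriv, conj_mul', norm_mul, norm_inv, ← ofReal_pow, ← ofReal_one, ← ofReal_sub,
    norm_real, Real.norm_of_nonneg hpos.le, inv_mul_le_iff₀ hpos, mul_one] at hle

end SchwarzPick

theorem IsPrimitiveRoot.sum_pow_pow_eq {R : Type*} [CommRing R] [IsDomain R] {ω : R} {k : ℕ}
    (hω : IsPrimitiveRoot ω k) (n : ℕ) :
    ∑ j ∈ range k, (ω ^ j) ^ n = if k ∣ n then (k : R) else 0 := by
  simp_rw [← pow_mul, mul_comm _ n, pow_mul]
  split_ifs with hkn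
  · simp [(hω.pow_eq_one_iff_dvd n).2 hkn]
  · have hne : ω ^ n - 1 ≠ 0 := sub_ne_zero.2 fun h => hkn ((hω.pow_eq_one_iff_dvd n).1 h)
    have := geom_sum_mul (ω ^ n) k
    rw [← pow_mul, mul_comm n k, pow_mul, hω.pow_eq_one, one_pow, sub_self] at this
    exact (mul_eq_zero.1 this).resolve_right hne

theorem norm_inv_natCast_mul_sum_lt_one {k : ℕ} (hk : k ≠ 0) {u : ℕ → ℂ}
    (hu : ∀ j, ‖u j‖ < 1) : ‖(k : ℂ)⁻¹ * ∑ j ∈ range k, u j‖ < 1 := by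
  have hk0 : (0 : ℝ) < k := by exact_mod_cast Nat.pos_of_ne_zero hk
  rw [norm_mul, norm_inv, norm_natCast, inv_mul_lt_iff₀ hk0, mul_one]
  calc ‖∑ j ∈ range k, u j‖ ≤ ∑ j ∈ range k, ‖u j‖ := norm_sum_le _ _
    _ < ∑ _j ∈ range k, (1 : ℝ) :=
        sum_lt_sum_of_nonempty (nonempty_range_iff.2 hk) fun j _ => hu j
    _ = k := by simp

section Coefficients

variable {f : ℂ → ℂ} {a : ℕ → ℂ}

theorem hasSum_coeff_mul_sum_rotations
    (hrep : ∀ z ∈ ball (0 : ℂ) 1, HasSum (fun n => a n * z ^ n) (f z)) {k : ℕ} (hk : k ≠ 0)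
    {ω : ℂ} (hω : IsPrimitiveRoot ω k) {z : ℂ} (hz : z ∈ ball (0 : ℂ) 1) :
    HasSum (fun m => a (k * m) * (z ^ k) ^ m) ((k : ℂ)⁻¹ * ∑ j ∈ range k, f (ω ^ j * z)) := by
  have hmem : ∀ j : ℕ, ω ^ j * z ∈ ball (0 : ℂ) 1 := fun j => by
    simpa [norm_mul, norm_pow, hω.norm'_eq_one hk] using hz
  have hsum : HasSum (fun n => if k ∣ n then (k : ℂ) * (a n * z ^ n) else 0)
      (∑ j ∈ range k, f (ω ^ j * z)) := by
    convert hasSum_sum fun j (_ : j ∈ range k) => hrep _ (hmem j) using 1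
    ext n
    have hrot : ∀ j, a n * (ω ^ j * z) ^ n = a n * z ^ n * (ω ^ j) ^ n := fun j => by ring
    simp_rw [hrot, ← mul_sum, hω.sum_pow_pow_eq]
    split_ifs <;> ring
  have hsub := ((mul_right_injective₀ hk).hasSum_iff
    fun n hn => if_neg fun ⟨m, hm⟩ => hn ⟨m, hm.symm⟩).2 hsum
  have hkC : (k : ℂ) ≠ 0 := Nat.cast_ne_zero.2 hk
  simpa [Function.comp_def, ← pow_mul, ← mul_assoc, hkC] using hsub.mul_left (k : ℂ)⁻¹

theorem norm_coeff_le_one_sub_sq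
    (hrep : ∀ z ∈ ball (0 : ℂ) 1, HasSum (fun n => a n * z ^ n) (f z))
    (hmaps : MapsTo f (ball 0 1) (ball 0 1)) {k : ℕ} (hk : k ≠ 0) :
    ‖a k‖ ≤ 1 - ‖a 0‖ ^ 2 := by
  have hω := isPrimitiveRoot_exp k hk
  have hsub : ∀ w ∈ ball (0 : ℂ) 1, HasSum (fun m => a (k * m) * w ^ m)
      (∑' m, a (k * m) * w ^ m) ∧ ‖∑' m, a (k * m) * w ^ m‖ < 1 := by
    intro w hw
    obtain ⟨z, rfl⟩ := IsAlgClosed.exists_pow_nat_eq w (Nat.pos_of_ne_zero hk)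
    have hz : z ∈ ball (0 : ℂ) 1 := by
      simpa [← pow_lt_one_iff_of_nonneg (norm_nonneg z) hk] using hw
    have hsum := hasSum_coeff_mul_sum_rotations hrep hk hω hz
    rw [hsum.tsum_eq]
    exact ⟨hsum, norm_inv_natCast_mul_sum_lt_one hk fun j =>
      mem_ball_zero_iff.1 (hmaps (mem_ball_zero_iff.2 (by simpa [hω.norm'_eq_one hk] using hz)))⟩
  have hsum := fun w hw => (hsub w hw).1
  have := schwarzPick_norm_deriv_le (differentiableOn_of_hasSum hsum)
    fun w hw => mem_ball_zero_iff.2 (hsub w hw).2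
  rwa [deriv_zero_eq_of_hasSum hsum, apply_zero_of_hasSum hsum, mul_zero, mul_one] at this

end Coefficients

theorem tsum_mul_pow_succ_le {b : ℕ → ℝ} {B r : ℝ} (hb0 : ∀ k, 0 ≤ b k) (hbB : ∀ k, b k ≤ B)
    (hr0 : 0 ≤ r) (hr1 : r < 1) : ∑' k, b k * r ^ (k + 1) ≤ B * (r / (1 - r)) := by
  have hgeom : HasSum (fun k => B * r ^ (k + 1)) (B * (r / (1 - r))) := by
    have := ((hasSum_geometric_of_lt_one hr0 hr1).mul_left r).mul_left B
    simpa only [pow_succ', div_eq_mul_inv] using this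
  have hle : ∀ k, b k * r ^ (k + 1) ≤ B * r ^ (k + 1) := fun k =>
    mul_le_mul_of_nonneg_right (hbB k) (by positivity)
  exact hasSum_le hle (hgeom.summable.of_nonneg_of_le (fun k => by have := hb0 k; positivity)
    hle).hasSum hgeom

theorem sq_div_add_mul_div_le_one {A r : ℝ} (hA0 : 0 ≤ A) (hA1 : A ≤ 1) (hr0 : 0 ≤ r)
    (hr : r ≤ 1 / 3) : ((A + r) / (1 + A * r)) ^ 2 + (1 - A ^ 2) * (r / (1 - r)) ≤ 1 := by
  have hden : 0 < 1 + A * r := by positivity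
  have hsq :
      ((A + r) / (1 + A * r)) ^ 2 = 1 - (1 - A ^ 2) * ((1 - r ^ 2) / (1 + A * r) ^ 2) := by
    field_simp
    ring
  have hgeom : r / (1 - r) ≤ (1 - r ^ 2) / (1 + A * r) ^ 2 := by
    rw [div_le_div_iff₀ (by linarith) (by positivity)]
    have hAr : (1 + A * r) ^ 2 ≤ (1 + r) ^ 2 := by gcongr; nlinarith
    nlinarith [mul_le_mul_of_nonneg_left hAr hr0,
      mul_nonneg (by linarith : 0 ≤ 1 + r) (by linarith : 0 ≤ 1 - 3 * r)]
  rw [hsq]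
  nlinarith [mul_le_mul_of_nonneg_left hgeom (by nlinarith : 0 ≤ 1 - A ^ 2)]

theorem bohr_with_f_sq_general (f : ℂ → ℂ) (a : ℕ → ℂ)
    (hrep : ∀ z ∈ Metric.ball (0 : ℂ) 1, HasSum (fun k : ℕ => a k * z ^ k) (f z))
    (hbd : ∀ z ∈ Metric.ball (0 : ℂ) 1, ‖f z‖ < 1)
    (z : ℂ) (r : ℝ) (hz : ‖z‖ = r) (hr : r ≤ 1 / 3) :
    ‖f z‖ ^ 2 + ∑' k : ℕ, ‖a (k + 1)‖ * r ^ (k + 1) ≤ 1 := by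
  have hmaps : MapsTo f (ball 0 1) (ball 0 1) := fun w hw => mem_ball_zero_iff.2 (hbd w hw)
  have hr0 : 0 ≤ r := hz ▸ norm_nonneg z
  have hA1 : ‖a 0‖ < 1 := apply_zero_of_hasSum hrep ▸ hbd 0 (mem_ball_self one_pos)
  have hvalue : ‖f z‖ ≤ (‖a 0‖ + r) / (1 + ‖a 0‖ * r) := by
    simpa [apply_zero_of_hasSum hrep, hz] using schwarzPick_norm_le
      (differentiableOn_of_hasSum hrep) hmaps (mem_ball_zero_iff.2 (by linarith : ‖z‖ < 1))
  have hcoeff : ∀ k, ‖a (k + 1)‖ ≤ 1 - ‖a 0‖ ^ 2 := fun k =>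
    norm_coeff_le_one_sub_sq hrep hmaps k.succ_ne_zero
  calc ‖f z‖ ^ 2 + ∑' k : ℕ, ‖a (k + 1)‖ * r ^ (k + 1)
      ≤ ((‖a 0‖ + r) / (1 + ‖a 0‖ * r)) ^ 2 + (1 - ‖a 0‖ ^ 2) * (r / (1 - r)) :=
        add_le_add (pow_le_pow_left₀ (norm_nonneg _) hvalue 2)
          (tsum_mul_pow_succ_le (fun _ => norm_nonneg _) hcoeff hr0 (by linarith))
    _ ≤ 1 := sq_div_add_mul_div_le_one (norm_nonneg _) hA1.le hr0 hr

/-- `|f(z)|² + Σ_{k≥1} |a_k| r^k ≤ 1` for `|z| = r ≤ 1/3`. -/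
theorem bohr_with_f_sq (f : ℂ → ℂ) (a : ℕ → ℂ)
    (hf : AnalyticOn ℂ f (Metric.ball (0 : ℂ) 1))
    (hrep : ∀ z ∈ Metric.ball (0 : ℂ) 1, HasSum (fun k : ℕ => a k * z ^ k) (f z))
    (hbd : ∀ z ∈ Metric.ball (0 : ℂ) 1, ‖f z‖ < 1)
    (z : ℂ) (r : ℝ) (hz : ‖z‖ = r) (hr : r ≤ 1 / 3) :
    ‖f z‖ ^ 2 + ∑' k : ℕ, ‖a (k + 1)‖ * r ^ (k + 1) ≤ 1 :=
  bohr_with_f_sq_general f a hrep hbd z r hz hr
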